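/- arXiv:2406.14414 — 2 statements merged into one kernel-verified Lean document; each statement's English description precedes it below -/
import Mathlib

section
/- Let d ≥ 0 be an integer and set u = (d+1)k. Then the u×u matrix whose rows are indexed by the pairs (i,m) with 0 ≤ i ≤ k−1 and 0 ≤ m ≤ d, whose columns are indexed by j = 1, …, u, and whose ((i,m), j) entry is ξ^{i(j−1)}·(j−1)^m (with the convention 0^0 = 1), has nonzero determinant. -/
/-!
Since `ξ ^ k = 1`, the entry in column `N = r + k t` is `ξ ^ (i r) * N ^ m`. Hence, after
reordering columns, the matrix factors as `1 ⊗ V(ξ^i)` times a block-diagonal matrix whose `r`-th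
block is the (transposed) Vandermonde matrix at the nodes `r, r + k, …, r + d k`. The first factor
is nonsingular because the powers of a primitive root are distinct, the second because the nodes
are distinct integers and `K` has characteristic zero.
-/

open Matrix
open scoped Kronecker

/-- Row `(m, i)` and column `(t, r)` carry the entry `ζ ^ (i N) * N ^ m` with `N = r + k t`. -/
def expMonomialMatrix {R : Type*} [CommRing R] (k d : ℕ) (ζ : R) :
    Matrix (Fin (d + 1) × Fin k) (Fin (d + 1) × Fin k) R :=
  of fun p q => ζ ^ ((p.2 : ℕ) * (finProdFinEquiv q : ℕ)) * ((finProdFinEquiv q : ℕ) : R) ^ (p.1 : ℕ)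

theorem expMonomialMatrix_eq_kronecker_mul_blockDiagonal {R : Type*} [CommRing R] {k d : ℕ}
    {ζ : R} (hζ : ζ ^ k = 1) :
    expMonomialMatrix k d ζ =
      (1 ⊗ₖ vandermonde fun i : Fin k => ζ ^ (i : ℕ)) *
        blockDiagonal fun r => (vandermonde fun t => ((finProdFinEquiv (t, r) : ℕ) : R))ᵀ := by
  ext ⟨m, i⟩ ⟨t, r⟩
  have hperiodic : ζ ^ ((i : ℕ) * (r + k * t)) = ζ ^ ((i : ℕ) * r) := by
    rw [mul_add, pow_add, mul_left_comm, pow_mul ζ k, hζ, one_pow, mul_one]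
  simp [expMonomialMatrix, mul_apply, Fintype.sum_prod_type, one_apply, blockDiagonal_apply,
    hperiodic, ← pow_mul]

theorem det_expMonomialMatrix_ne_zero {K : Type*} [Field K] [CharZero K] {k d : ℕ} {ξ : K}
    (hξ : IsPrimitiveRoot ξ k) : (expMonomialMatrix k d ξ).det ≠ 0 := by
  rw [expMonomialMatrix_eq_kronecker_mul_blockDiagonal hξ.pow_eq_one, det_mul, det_kronecker,
    det_blockDiagonal]
  refine mul_ne_zero (mul_ne_zero (by simp) (pow_ne_zero _ ?_)) ?_
  · rw [det_vandermonde_ne_zero_iff]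
    exact fun a b h => Fin.ext (hξ.pow_inj a.isLt b.isLt h)
  refine Finset.prod_ne_zero_iff.mpr fun r _ => ?_
  rw [det_transpose, det_vandermonde_ne_zero_iff]
  exact Nat.cast_injective.comp <| Fin.val_injective.comp <|
    finProdFinEquiv.injective.comp (Prod.mk_left_injective r)

theorem statement9_general (K : Type*) [Field K] [CharZero K] (k : ℕ)
    (ξ : K) (hξ : IsPrimitiveRoot ξ k) (d : ℕ) :
    (Matrix.of fun (p q : Fin k × Fin (d + 1)) =>
        ξ ^ ((p.1 : ℕ) * ((finProdFinEquiv q : Fin (k * (d + 1))) : ℕ))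
          * (((finProdFinEquiv q : Fin (k * (d + 1))) : ℕ) : K) ^ (p.2 : ℕ)).det ≠ 0 := by
  let e : Fin (d + 1) × Fin k ≃ Fin k × Fin (d + 1) :=
    finProdFinEquiv.trans ((finCongr (Nat.mul_comm _ _)).trans finProdFinEquiv.symm)
  have hreindex : (Matrix.of fun (p q : Fin k × Fin (d + 1)) =>
        ξ ^ ((p.1 : ℕ) * ((finProdFinEquiv q : Fin (k * (d + 1))) : ℕ))
          * (((finProdFinEquiv q : Fin (k * (d + 1))) : ℕ) : K) ^ (p.2 : ℕ)) =
      reindex (Equiv.prodComm _ _) e (expMonomialMatrix k d ξ) := by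
    have hcol (q : Fin k × Fin (d + 1)) :
        (finProdFinEquiv (e.symm q) : ℕ) = finProdFinEquiv q := by
      simp [e, Nat.mod_add_div]
    ext p q
    simp only [reindex_apply, submatrix_apply, expMonomialMatrix, of_apply, hcol]
    rfl
  rw [hreindex, det_reindex]
  exact mul_ne_zero (Int.cast_ne_zero.mpr (Units.ne_zero _)) (det_expMonomialMatrix_ne_zero hξ)

/-- for `u = (d+1)k`, the `u × u` matrix with rows indexed by pairs `(i, m)`
(`0 ≤ i ≤ k-1`, `0 ≤ m ≤ d`), columns indexed by `j = 1, …, u`, and entry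
`ξ^{i(j-1)}·(j-1)^m` (with `0^0 = 1`), has nonzero determinant. -/
theorem statement9 (K : Type*) [Field K] [CharZero K] (k : ℕ) (hk : 1 ≤ k)
    (ξ : K) (hξ : IsPrimitiveRoot ξ k) (d : ℕ) :
    (Matrix.of fun (p q : Fin k × Fin (d + 1)) =>
        ξ ^ ((p.1 : ℕ) * ((finProdFinEquiv q : Fin (k * (d + 1))) : ℕ))
          * (((finProdFinEquiv q : Fin (k * (d + 1))) : ℕ) : K) ^ (p.2 : ℕ)).det ≠ 0 :=
  statement9_general K k ξ hξ d
end

section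
/- Let T ∈ M_k(R) be the matrix with entries T_{a,a+1} = 1 for 1 ≤ a ≤ k−1, T_{k,1} = t, and all other entries 0. Then T is invertible in M_k(R), T^k = t·I (where I is the identity matrix), and the K-subalgebra of M_k(R) generated by T, T^{−1} and all diagonal matrices with entries in K is the whole matrix algebra M_k(R). -/
/-!
`T ^ k = t • 1` is a unit, hence so is `T`, and the subalgebra contains `t • 1 = T ^ k` and
`t⁻¹ • 1 = T⁻¹ ^ k`; since `t` and `t⁻¹` generate `K[t, t⁻¹]`, it contains every scalar matrix.
Sandwiching `T ^ n` between the diagonal idempotents `E_aa` and `E_bb` isolates its `(a, b)` entry,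
which is `1` for `n = b - a` and `t` for `n = b + k - a`; multiplying by scalars then gives every
`single a b p`, and these span `M_k(R)`.
-/

open Matrix
open scoped LaurentPolynomial

namespace LaurentPolynomial

theorem adjoin_T_one_T_neg_one (R : Type*) [CommSemiring R] :
    Algebra.adjoin R {(T 1 : R[T;T⁻¹]), T (-1)} = ⊤ := by
  refine Algebra.eq_top_iff.mpr fun p => ?_
  have hT : ∀ n : ℤ, (T n : R[T;T⁻¹]) ∈ Algebra.adjoin R {T 1, T (-1)} := by
    intro n
    induction n using Int.induction_on with
    | zero => rw [T_zero]; exact one_mem _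
    | succ n ih => rw [T_add]; exact mul_mem ih (Algebra.subset_adjoin (by simp))
    | pred n ih => rw [sub_eq_add_neg, T_add]; exact mul_mem ih (Algebra.subset_adjoin (by simp))
  induction p using LaurentPolynomial.induction_on' with
  | add p q hp hq => exact add_mem hp hq
  | C_mul_T n a => rw [← smul_eq_C_mul]; exact Subalgebra.smul_mem _ (hT n) a

theorem algebraMap_mem_of_T_one_mem_of_T_neg_one_mem {R A : Type*} [CommSemiring R] [Semiring A]
    [Algebra R A] [Algebra R[T;T⁻¹] A] [IsScalarTower R R[T;T⁻¹] A] {S : Subalgebra R A}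
    (h₁ : algebraMap R[T;T⁻¹] A (T 1) ∈ S) (h₂ : algebraMap R[T;T⁻¹] A (T (-1)) ∈ S)
    (p : R[T;T⁻¹]) : algebraMap R[T;T⁻¹] A p ∈ S := by
  have : Algebra.adjoin R {T 1, T (-1)} ≤ S.comap (IsScalarTower.toAlgHom R R[T;T⁻¹] A) :=
    Algebra.adjoin_le (Set.pair_subset h₁ h₂)
  exact this (adjoin_T_one_T_neg_one R ▸ Algebra.mem_top)

end LaurentPolynomial

namespace Matrix

variable {n K R : Type*} [Fintype n] [DecidableEq n] [CommSemiring K] [CommSemiring R] [Algebra K R]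

theorem subalgebra_eq_top_of_algebraMap_mem_of_single_mem (S : Subalgebra K (Matrix n n R))
    (hscalar : ∀ c, algebraMap R (Matrix n n R) c ∈ S)
    (hsingle : ∀ a b, ∃ u, IsUnit u ∧ single a b u ∈ S) : S = ⊤ := by
  refine Algebra.eq_top_iff.mpr fun M => ?_
  rw [matrix_eq_sum_single M]
  refine sum_mem fun a _ => sum_mem fun b _ => ?_
  obtain ⟨u, ⟨u, rfl⟩, hu⟩ := hsingle a b
  have : single a b (M a b) = (M a b * (↑u⁻¹ : R)) • single a b (u : R) := by
    rw [smul_single, smul_eq_mul, mul_assoc, Units.inv_mul, mul_one]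
  rw [this, Algebra.smul_def]
  exact mul_mem (hscalar _) hu

end Matrix

noncomputable def twistedShift (K : Type*) [Semiring K] (k : ℕ) :
    Matrix (Fin k) (Fin k) K[T;T⁻¹] :=
  of fun a b =>
    if (a : ℕ) + 1 = (b : ℕ) then 1
    else if (a : ℕ) = k - 1 ∧ (b : ℕ) = 0 then LaurentPolynomial.T 1
    else 0

section TwistedShift

variable {K : Type*} {k : ℕ}

theorem twistedShift_pow_apply [Semiring K] {n : ℕ} (hn : n ≤ k) (a b : Fin k) :
    (twistedShift K k ^ n) a b =
      if (a : ℕ) + n = b then 1 else if (a : ℕ) + n = b + k then LaurentPolynomial.T 1 else 0 := by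
  induction n generalizing b with
  | zero =>
    rw [pow_zero, one_apply]
    have := b.isLt
    split_ifs <;> first | rfl | (exfalso; omega)
  | succ n ih =>
    obtain ⟨m, hm⟩ : ∃ m : Fin k, (m : ℕ) = a + n ∨ (m : ℕ) + k = a + n := by
      rcases Nat.lt_or_ge (a + n) k with h | h
      exacts [⟨⟨a + n, h⟩, Or.inl rfl⟩, ⟨⟨a + n - k, by omega⟩, Or.inr (Nat.sub_add_cancel h)⟩]
    rw [pow_succ, mul_apply, Fintype.sum_eq_single m fun c hc => ?_]
    · rw [ih (by omega), twistedShift, of_apply]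
      have := a.isLt; have := b.isLt; have := m.isLt
      split_ifs <;> first | (exfalso; omega) | simp
    · have := c.isLt
      have : (c : ℕ) ≠ m := fun h => hc (Fin.ext h)
      rw [ih (by omega), if_neg (by omega), if_neg (by omega), zero_mul]

theorem twistedShift_pow_card [Semiring K] :
    twistedShift K k ^ k =
      (LaurentPolynomial.T 1 : K[T;T⁻¹]) • (1 : Matrix (Fin k) (Fin k) K[T;T⁻¹]) := by
  refine Matrix.ext fun a b => ?_
  rw [twistedShift_pow_apply le_rfl, Matrix.smul_apply, one_apply, smul_eq_mul]
  have := b.isLt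
  split_ifs <;> first | (exfalso; omega) | simp

theorem exists_isUnit_twistedShift_pow_apply [Semiring K] (a b : Fin k) :
    ∃ n, IsUnit ((twistedShift K k ^ n) a b) := by
  have := a.isLt; have := b.isLt
  rcases le_or_gt (a : ℕ) b with h | h
  · refine ⟨b - a, ?_⟩
    rw [twistedShift_pow_apply (by omega), if_pos (by omega)]
    exact isUnit_one
  · refine ⟨b + k - a, ?_⟩
    rw [twistedShift_pow_apply (by omega), if_neg (by omega), if_pos (by omega)]
    exact LaurentPolynomial.isUnit_T 1

theorem isUnit_twistedShift [CommSemiring K] : IsUnit (twistedShift K k) := by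
  rcases k.eq_zero_or_pos with rfl | hk
  · exact isUnit_of_subsingleton _
  refine (isUnit_pow_iff hk.ne').mp ?_
  rw [twistedShift_pow_card, ← Algebra.algebraMap_eq_smul_one]
  exact (LaurentPolynomial.isUnit_T 1).map _

theorem twistedShift_inv_pow_card [CommRing K] :
    (twistedShift K k)⁻¹ ^ k =
      (LaurentPolynomial.T (-1) : K[T;T⁻¹]) • (1 : Matrix (Fin k) (Fin k) K[T;T⁻¹]) := by
  rw [inv_pow', twistedShift_pow_card]
  refine inv_eq_left_inv ?_
  rw [smul_mul_smul_comm, ← LaurentPolynomial.T_add, neg_add_cancel, LaurentPolynomial.T_zero,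
    one_smul, one_mul]

theorem twistedShift_subalgebra_eq_top [CommRing K]
    (S : Subalgebra K (Matrix (Fin k) (Fin k) K[T;T⁻¹])) (hT : twistedShift K k ∈ S)
    (hTinv : (twistedShift K k)⁻¹ ∈ S) (hE : ∀ a, single a a (1 : K[T;T⁻¹]) ∈ S) : S = ⊤ := by
  refine subalgebra_eq_top_of_algebraMap_mem_of_single_mem S
    (LaurentPolynomial.algebraMap_mem_of_T_one_mem_of_T_neg_one_mem ?_ ?_) fun a b => ?_
  · rw [Algebra.algebraMap_eq_smul_one, ← twistedShift_pow_card]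
    exact pow_mem hT k
  · rw [Algebra.algebraMap_eq_smul_one, ← twistedShift_inv_pow_card]
    exact pow_mem hTinv k
  · obtain ⟨n, hn⟩ := exists_isUnit_twistedShift_pow_apply (K := K) a b
    refine ⟨_, hn, ?_⟩
    simpa only [single_mul_mul_single, one_mul, mul_one] using
      mul_mem (mul_mem (hE a) (pow_mem hT n)) (hE b)

end TwistedShift

theorem statement19_general (K : Type*) [Field K] (k : ℕ)
    (T : Matrix (Fin k) (Fin k) (LaurentPolynomial K))
    (hT : ∀ a b : Fin k, T a b =
      if (a : ℕ) + 1 = (b : ℕ) then 1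
      else if (a : ℕ) = k - 1 ∧ (b : ℕ) = 0 then LaurentPolynomial.T 1
      else 0) :
    IsUnit T ∧
    T ^ k = (LaurentPolynomial.T 1 : LaurentPolynomial K) • (1 : Matrix (Fin k) (Fin k) (LaurentPolynomial K)) ∧
    Algebra.adjoin K
      ({T, T⁻¹} ∪
        {M : Matrix (Fin k) (Fin k) (LaurentPolynomial K) |
          ∃ dg : Fin k → K,
            M = Matrix.diagonal fun a => algebraMap K (LaurentPolynomial K) (dg a)})
      = ⊤ := by
  obtain rfl : T = twistedShift K k := Matrix.ext hT
  refine ⟨isUnit_twistedShift, twistedShift_pow_card, ?_⟩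
  refine twistedShift_subalgebra_eq_top _ (Algebra.subset_adjoin (by simp))
    (Algebra.subset_adjoin (by simp)) fun a => Algebra.subset_adjoin (Or.inr ⟨Pi.single a 1, ?_⟩)
  rw [← diagonal_single]
  congr 1
  funext i
  rcases eq_or_ne i a with rfl | hia <;> simp [*]

/-- the matrix `T` over the Laurent polynomial ring `R = K[t,t⁻¹]` with
`T_{a,a+1} = 1` (`1 ≤ a ≤ k-1`), `T_{k,1} = t` and all other entries `0` is invertible,
satisfies `T^k = t·I`, and the `K`-subalgebra of `M_k(R)` generated by `T`, `T⁻¹` and all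
diagonal matrices with entries in `K` is the whole matrix algebra `M_k(R)`. -/
theorem statement19 (K : Type*) [Field K] (k : ℕ) (hk : 1 ≤ k)
    (T : Matrix (Fin k) (Fin k) (LaurentPolynomial K))
    (hT : ∀ a b : Fin k, T a b =
      if (a : ℕ) + 1 = (b : ℕ) then 1
      else if (a : ℕ) = k - 1 ∧ (b : ℕ) = 0 then LaurentPolynomial.T 1
      else 0) :
    IsUnit T ∧
    T ^ k = (LaurentPolynomial.T 1 : LaurentPolynomial K) • (1 : Matrix (Fin k) (Fin k) (LaurentPolynomial K)) ∧
    Algebra.adjoin K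
      ({T, T⁻¹} ∪
        {M : Matrix (Fin k) (Fin k) (LaurentPolynomial K) |
          ∃ dg : Fin k → K,
            M = Matrix.diagonal fun a => algebraMap K (LaurentPolynomial K) (dg a)})
      = ⊤ :=
  statement19_general K k T hT
end
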